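/- arXiv:1907.06550 — 2 statements merged into one kernel-verified Lean document; each statement's English description precedes it below -/
import Mathlib

section
/- Let (b_n)_{n ≥ 1} be a sequence of nonnegative real numbers, let α ∈ (1/2, 1], β ≥ 0, ω ≥ 0, and suppose b_{n+1} ≤ (1 − α/n) b_n + β n^{−5/4} √(b_n) + ω n^{−3/2} for every n ≥ 1. Define λ0 = ((β + √(β² + 2ω(2α − 1)))/(2α − 1))² and λ = max{b_1, λ0}. Then b_n ≤ λ n^{−1/2} for every n ≥ 1. -/
noncomputable section

-- auxiliary: sqrt gap inequality
lemma aux_gap (x : ℝ) (hx1 : 1 ≤ x) :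
    x ^ (-(1:ℝ)/2) - (x+1) ^ (-(1:ℝ)/2) ≤ (1/2) * x ^ (-(3:ℝ)/2) := by
  have hx : (0:ℝ) < x := by linarith
  set a := Real.sqrt x with ha
  set c := Real.sqrt (x+1) with hc
  have ha0 : 0 < a := Real.sqrt_pos.mpr hx
  have hc0 : 0 < c := Real.sqrt_pos.mpr (by linarith)
  have ha2 : a^2 = x := Real.sq_sqrt hx.le
  have hc2 : c^2 = x + 1 := Real.sq_sqrt (by linarith)
  have ha1 : 1 ≤ a := by nlinarith
  have hac : a ≤ c := Real.sqrt_le_sqrt (by linarith)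
  have e1 : x ^ (-(1:ℝ)/2) = a⁻¹ := by
    rw [show (-(1:ℝ)/2) = -(1/2) by norm_num, Real.rpow_neg hx.le, ← Real.sqrt_eq_rpow]
  have e2 : (x+1) ^ (-(1:ℝ)/2) = c⁻¹ := by
    rw [show (-(1:ℝ)/2) = -(1/2) by norm_num, Real.rpow_neg (by linarith), ← Real.sqrt_eq_rpow]
  have e3 : x ^ (-(3:ℝ)/2) = (a⁻¹)^3 := by
    rw [← e1, ← Real.rpow_natCast (x ^ (-(1:ℝ)/2)) 3, ← Real.rpow_mul hx.le]
    norm_num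
  rw [e1, e2, e3]
  rw [inv_sub_inv ha0.ne' hc0.ne']
  have h2a : (0:ℝ) < 2 * a^3 := by positivity
  rw [show (1/2) * (a⁻¹)^3 = 1 / (2 * a^3) by field_simp]
  rw [div_le_div_iff₀ (by positivity) h2a]
  have hba : (c - a) * (c + a) = 1 := by nlinarith
  nlinarith [mul_nonneg (mul_nonneg ha0.le ha0.le) (sub_nonneg.mpr hac),
    mul_nonneg (mul_nonneg ha0.le hc0.le) (sub_nonneg.mpr hac),
    mul_pos ha0 hc0]

/-- recursive sequence lemma, Lemma 4 of the paper: if a nonnegative sequence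
satisfies `b_{n+1} ≤ (1 - α/n) b_n + β n^{-5/4} √(b_n) + ω n^{-3/2}` with `α ∈ (1/2, 1]`,
`β, ω ≥ 0`, then `b_n ≤ λ n^{-1/2}` where `λ = max {b_1, λ₀}` and
`λ₀ = ((β + √(β² + 2ω(2α − 1)))/(2α − 1))²`. -/
theorem stmt11 (b : ℕ → ℝ) (α β ω : ℝ)
    (hbnonneg : ∀ n : ℕ, 1 ≤ n → 0 ≤ b n)
    (hα : 1 / 2 < α) (hα1 : α ≤ 1) (hβ : 0 ≤ β) (hω : 0 ≤ ω)
    (hrec : ∀ n : ℕ, 1 ≤ n →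
      b (n + 1) ≤ (1 - α / (n : ℝ)) * b n + β * (n : ℝ) ^ (-(5 : ℝ) / 4) * Real.sqrt (b n) +
        ω * (n : ℝ) ^ (-(3 : ℝ) / 2)) :
    ∀ n : ℕ, 1 ≤ n →
      b n ≤ max (b 1) (((β + Real.sqrt (β ^ 2 + 2 * ω * (2 * α - 1))) / (2 * α - 1)) ^ 2) *
        (n : ℝ) ^ (-(1 : ℝ) / 2) := by
  have hc : (0:ℝ) < 2 * α - 1 := by linarith
  set s := Real.sqrt (β ^ 2 + 2 * ω * (2 * α - 1)) with hs
  set L : ℝ := max (b 1) (((β + s) / (2 * α - 1)) ^ 2) with hLdef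
  have hs0 : 0 ≤ s := Real.sqrt_nonneg _
  have hs2 : s ^ 2 = β ^ 2 + 2 * ω * (2 * α - 1) := Real.sq_sqrt (by positivity)
  have hβs : β ≤ s := by nlinarith
  have hL0 : 0 ≤ L := le_trans (sq_nonneg _) (le_max_right _ _)
  have hkey : 2 * β * Real.sqrt L + 2 * ω ≤ (2 * α - 1) * L := by
    set x := Real.sqrt L with hxd
    have hx0 : 0 ≤ x := Real.sqrt_nonneg _
    have hx2 : x ^ 2 = L := Real.sq_sqrt hL0
    have hge : (β + s) / (2 * α - 1) ≤ x := by
      have h1 : ((β + s) / (2 * α - 1)) ^ 2 ≤ L := le_max_right _ _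
      have h2 : Real.sqrt (((β + s) / (2 * α - 1)) ^ 2) ≤ x := Real.sqrt_le_sqrt h1
      rwa [Real.sqrt_sq (by positivity)] at h2
    have hcx : β + s ≤ (2 * α - 1) * x := by
      rw [div_le_iff₀ hc] at hge; linarith [mul_comm x (2 * α - 1)]
    have hprod : (β + s) * (s - β) ≤ ((2*α-1)*x) * ((2*α-1)*x - 2*β) :=
      mul_le_mul hcx (by linarith) (by linarith) (mul_nonneg hc.le hx0)
    rw [← hx2]
    nlinarith [hprod, hs2, hc, mul_nonneg hc.le hx0]
  intro n hn
  induction n with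
  | zero => omega
  | succ m ih =>
    rcases Nat.lt_or_ge m 1 with hm | hm
    · have : m = 0 := by omega
      subst this
      norm_num [Real.one_rpow]
      exact le_max_left _ _
    · -- induction step
      have ihm : b m ≤ L * (m:ℝ) ^ (-(1:ℝ)/2) := ih hm
      set x : ℝ := (m : ℝ) with hxd
      have hx1 : 1 ≤ x := by rw [hxd]; exact_mod_cast hm
      have hx : (0:ℝ) < x := by linarith
      have hbm : 0 ≤ b m := hbnonneg m hm
      -- powers
      have hu : (0:ℝ) < x ^ (-(1:ℝ)/2) := Real.rpow_pos_of_pos hx _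
      have hv : (0:ℝ) < x ^ (-(3:ℝ)/2) := Real.rpow_pos_of_pos hx _
      have e1 : x ^ (-(5:ℝ)/4) * x ^ (-(1:ℝ)/4) = x ^ (-(3:ℝ)/2) := by
        rw [← Real.rpow_add hx]; norm_num
      have e2 : x⁻¹ * x ^ (-(1:ℝ)/2) = x ^ (-(3:ℝ)/2) := by
        rw [show x⁻¹ = x ^ (-1:ℝ) by rw [Real.rpow_neg_one], ← Real.rpow_add hx]
        norm_num
      have hsqb : Real.sqrt (b m) ≤ Real.sqrt L * x ^ (-(1:ℝ)/4) := by
        calc Real.sqrt (b m) ≤ Real.sqrt (L * x ^ (-(1:ℝ)/2)) := Real.sqrt_le_sqrt ihm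
          _ = Real.sqrt L * x ^ (-(1:ℝ)/4) := by
              rw [Real.sqrt_mul hL0, Real.sqrt_eq_rpow (x ^ (-(1:ℝ)/2)),
                ← Real.rpow_mul hx.le]
              norm_num
      have hαx : 0 ≤ 1 - α / x := by
        have : α / x ≤ 1 := by rw [div_le_one hx]; linarith
        linarith
      have step1 : b (m+1) ≤ (1 - α / x) * (L * x ^ (-(1:ℝ)/2))
          + β * x ^ (-(5:ℝ)/4) * (Real.sqrt L * x ^ (-(1:ℝ)/4)) + ω * x ^ (-(3:ℝ)/2) := by
        refine le_trans (hrec m hm) ?_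
        gcongr
      have step2 : (1 - α / x) * (L * x ^ (-(1:ℝ)/2))
          + β * x ^ (-(5:ℝ)/4) * (Real.sqrt L * x ^ (-(1:ℝ)/4)) + ω * x ^ (-(3:ℝ)/2)
          = L * x ^ (-(1:ℝ)/2) - (α * L - β * Real.sqrt L - ω) * x ^ (-(3:ℝ)/2) := by
        have : α / x * (L * x ^ (-(1:ℝ)/2)) = α * L * x ^ (-(3:ℝ)/2) := by
          rw [← e2]; field_simp
        rw [sub_mul, one_mul, this, ← e1]; ring
      have hgap : x ^ (-(1:ℝ)/2) - (x+1) ^ (-(1:ℝ)/2) ≤ (1/2) * x ^ (-(3:ℝ)/2) :=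
        aux_gap x hx1
      have hhalf : L / 2 ≤ α * L - β * Real.sqrt L - ω := by linarith
      have final : L * x ^ (-(1:ℝ)/2) - (α * L - β * Real.sqrt L - ω) * x ^ (-(3:ℝ)/2)
          ≤ L * (x+1) ^ (-(1:ℝ)/2) := by
        have h1 : L * (x ^ (-(1:ℝ)/2) - (x+1) ^ (-(1:ℝ)/2)) ≤ L * ((1/2) * x ^ (-(3:ℝ)/2)) :=
          mul_le_mul_of_nonneg_left hgap hL0
        have h2 : (L / 2) * x ^ (-(3:ℝ)/2) ≤ (α * L - β * Real.sqrt L - ω) * x ^ (-(3:ℝ)/2) :=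
          mul_le_mul_of_nonneg_right hhalf hv.le
        nlinarith
      have : b (m+1) ≤ L * (x+1) ^ (-(1:ℝ)/2) := by
        rw [step2] at step1; linarith
      push_cast
      exact this
end
end

section
/- Let f : [0,1]^{d_x} × [0,1]^{d_y} → ℝ satisfy: for every x, y ↦ f(x,y) is twice continuously differentiable with −M5·I ⪯ ∂²f/∂y²(x,y) ⪯ −M1·I for all (x,y), where 0 < M1 ≤ M5; each f(x,·) has unique maximizer y*(x) ∈ (0,1)^{d_y}; and |f(x1,y) − f(x2,y)| ≤ M2 ‖x1 − x2‖₂^α for all y and all x1, x2, with M2 > 0 and 0 < α ≤ 1. Let μ be a Borel probability measure on [0,1]^{d_x}, B a Borel set with μ(B) > 0 and diameter d_B = sup_{x,x' ∈ B} ‖x − x'‖₂, let f_B(y) = (1/μ(B)) ∫_B f(x,y) dμ(x), and let y*(B) be the unique maximizer of f_B over [0,1]^{d_y}. Then for every x ∈ B, M1 ‖y*(x) − y*(B)‖₂² ≤ 2 M2 d_B^α; in particular ‖y*(x) − y*(B)‖₂ ≤ √(2 M2 / M1) · d_B^{α/2}. -/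
open MeasureTheory
open scoped RealInnerProductSpace BigOperators

noncomputable section

/-- `ℝ^d` with the Euclidean norm. -/
abbrev E (d : ℕ) := EuclideanSpace ℝ (Fin d)

/-- The closed unit cube `[0,1]^d`. -/
def cube (d : ℕ) : Set (E d) := {y : E d | ∀ i, y i ∈ Set.Icc (0:ℝ) 1}

/-- The open unit cube `(0,1)^d`. -/
def openCube (d : ℕ) : Set (E d) := {y : E d | ∀ i, y i ∈ Set.Ioo (0:ℝ) 1}

section Aux

open Set

lemma cube_convex (d : ℕ) : Convex ℝ (cube d) := by
  intro a ha b hb s t hs ht hst i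
  have : (s • a + t • b) i = s * a i + t * b i := by
    simp [PiLp.add_apply, PiLp.smul_apply, smul_eq_mul]
  rw [this]
  have := (convex_Icc (0:ℝ) 1) (ha i) (hb i) hs ht hst
  simpa [smul_eq_mul] using this

lemma cube_closed (d : ℕ) : IsClosed (cube d) := by
  have : cube d = ⋂ i, (EuclideanSpace.proj (𝕜 := ℝ) i) ⁻¹' (Set.Icc (0:ℝ) 1) := by
    ext y; simp [cube, Set.mem_iInter, PiLp.proj_apply]
  rw [this]
  exact isClosed_iInter fun i =>
    (isClosed_Icc).preimage (EuclideanSpace.proj (𝕜 := ℝ) i).continuous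

lemma cube_bounded (d : ℕ) : Bornology.IsBounded (cube d) := by
  rw [Metric.isBounded_iff_subset_closedBall 0]
  refine ⟨Real.sqrt d, fun y hy => ?_⟩
  simp only [Metric.mem_closedBall, dist_zero_right]
  rw [EuclideanSpace.norm_eq]
  have hb : (∑ i : Fin d, ‖y i‖ ^ 2) ≤ (d : ℝ) := by
    calc (∑ i : Fin d, ‖y i‖ ^ 2) ≤ ∑ _i : Fin d, (1:ℝ) := by
          refine Finset.sum_le_sum fun i _ => ?_
          have := hy i
          have h1 : |y i| ≤ 1 := abs_le.2 ⟨by linarith [this.1], this.2⟩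
          calc ‖y i‖ ^ 2 = |y i| ^ 2 := by rw [Real.norm_eq_abs]
            _ ≤ 1 := by nlinarith [abs_nonneg (y i)]
      _ = (d : ℝ) := by simp
  exact Real.sqrt_le_sqrt hb

lemma cube_compact (d : ℕ) : IsCompact (cube d) :=
  Metric.isCompact_of_isClosed_isBounded (cube_closed d) (cube_bounded d)

lemma openCube_open (d : ℕ) : IsOpen (openCube d) := by
  have : openCube d = ⋂ i, (EuclideanSpace.proj (𝕜 := ℝ) i) ⁻¹' (Set.Ioo (0:ℝ) 1) := by
    ext y; simp [openCube, Set.mem_iInter, PiLp.proj_apply]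
  rw [this]
  exact isOpen_iInter_of_finite fun i =>
    (isOpen_Ioo).preimage (EuclideanSpace.proj (𝕜 := ℝ) i).continuous

lemma openCube_subset (d : ℕ) : openCube d ⊆ cube d :=
  fun _ hy i => Set.Ioo_subset_Icc_self (hy i)

/-- Strong concavity inequality with gradient, along the cube. -/
lemma sc_grad {dy : ℕ} {M1 : ℝ} {φ : E dy → ℝ} {g : E dy → E dy} {H : E dy → (E dy →L[ℝ] E dy)}
    (hgrad : ∀ y ∈ cube dy, HasGradientWithinAt φ (g y) (cube dy) y)
    (hHess : ∀ y ∈ cube dy, HasFDerivWithinAt g (H y) (cube dy) y)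
    (hgC : ContinuousOn g (cube dy))
    (hLoew : ∀ y ∈ cube dy, ∀ v : E dy, ⟪H y v, v⟫ ≤ -M1 * ‖v‖ ^ 2)
    {y z : E dy} (hy : y ∈ cube dy) (hz : z ∈ cube dy) :
    φ z ≤ φ y + ⟪g y, z - y⟫ - M1 / 2 * ‖z - y‖ ^ 2 := by
  set w := z - y with hw
  set γ : ℝ → E dy := fun t => y + t • w with hγ
  have hγ0 : γ 0 = y := by simp [hγ]
  have hγ1 : γ 1 = z := by simp [hγ, hw]
  have hγmem : ∀ t ∈ Icc (0:ℝ) 1, γ t ∈ cube dy := by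
    intro t ht
    have h := cube_convex dy hy hz (by linarith [ht.2] : (0:ℝ) ≤ 1 - t) ht.1 (by ring)
    have he : γ t = (1 - t) • y + t • z := by
      simp only [hγ, hw, sub_smul, one_smul, smul_sub]; abel
    rw [he]; exact h
  have hγcont : Continuous γ := by fun_prop
  have hγd : ∀ t : ℝ, HasDerivAt γ w t := by
    intro t
    have h := ((hasDerivAt_id t).smul_const w).const_add y
    rw [one_smul] at h
    exact h
  have hmaps : MapsTo γ (Icc (0:ℝ) 1) (cube dy) := hγmem
  set χ : ℝ → ℝ := fun t => ⟪g (γ t), w⟫ with hχ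
  have hχd : ∀ t ∈ Icc (0:ℝ) 1, HasDerivWithinAt χ ⟪H (γ t) w, w⟫ (Icc (0:ℝ) 1) t := by
    intro t ht
    have h1 : HasDerivWithinAt (fun s => g (γ s)) ((H (γ t)) w) (Icc (0:ℝ) 1) t :=
      (hHess _ (hγmem t ht)).comp_hasDerivWithinAt t ((hγd t).hasDerivWithinAt) hmaps
    have h2 := HasDerivWithinAt.inner ℝ h1 (hasDerivWithinAt_const t _ w)
    simpa using h2
  have hχcont : ContinuousOn χ (Icc (0:ℝ) 1) :=
    ContinuousOn.inner (hgC.comp hγcont.continuousOn hmaps) continuousOn_const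
  set c : ℝ := ‖w‖ ^ 2 with hc
  have step1 : ∀ t ∈ Icc (0:ℝ) 1, χ t ≤ χ 0 - M1 * c * t := by
    have hanti : AntitoneOn (fun t => χ t + M1 * c * t) (Icc (0:ℝ) 1) := by
      apply antitoneOn_of_hasDerivWithinAt_nonpos (convex_Icc 0 1)
        (f' := fun t => ⟪H (γ t) w, w⟫ + M1 * c)
        (hχcont.add (by fun_prop))
      · intro t ht
        rw [interior_Icc] at ht
        exact ((hχd t (Ioo_subset_Icc_self ht)).mono
            (interior_subset : interior (Icc (0:ℝ) 1) ⊆ Icc 0 1)).add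
          (((hasDerivAt_id t).const_mul (M1 * c)).hasDerivWithinAt.congr_deriv (by ring))
      · intro t ht
        rw [interior_Icc] at ht
        have := hLoew (γ t) (hγmem t (Ioo_subset_Icc_self ht)) w
        rw [← hc] at this; linarith
    intro t ht
    have h0 : (0:ℝ) ∈ Icc (0:ℝ) 1 := ⟨le_refl _, zero_le_one⟩
    have := hanti h0 ht ht.1
    simp only [mul_zero, add_zero] at this
    linarith
  set ψ : ℝ → ℝ := fun t => φ (γ t) with hψ
  have hψd : ∀ t ∈ Icc (0:ℝ) 1, HasDerivWithinAt ψ (χ t) (Icc (0:ℝ) 1) t := by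
    intro t ht
    have h1 := ((hgrad _ (hγmem t ht)).hasFDerivWithinAt).comp_hasDerivWithinAt t
      ((hγd t).hasDerivWithinAt) hmaps
    exact (by simpa [InnerProductSpace.toDual_apply_apply] using h1 :
      HasDerivWithinAt (φ ∘ γ) ⟪g (γ t), w⟫ (Icc (0:ℝ) 1) t)
  have hψcont : ContinuousOn ψ (Icc (0:ℝ) 1) := fun t ht => (hψd t ht).continuousWithinAt
  have hanti2 : AntitoneOn (fun t => ψ t - χ 0 * t + M1 / 2 * c * t ^ 2) (Icc (0:ℝ) 1) := by
    apply antitoneOn_of_hasDerivWithinAt_nonpos (convex_Icc 0 1)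
      (f' := fun t => χ t - χ 0 + M1 * c * t)
      ((hψcont.sub (by fun_prop)).add (by fun_prop))
    · intro t ht
      rw [interior_Icc] at ht
      have h1 := ((hψd t (Ioo_subset_Icc_self ht)).mono
          (interior_subset : interior (Icc (0:ℝ) 1) ⊆ Icc 0 1))
      have h2 : HasDerivWithinAt (fun t : ℝ => χ 0 * t) (χ 0) (interior (Icc (0:ℝ) 1)) t :=
        ((hasDerivAt_id t).const_mul (χ 0)).hasDerivWithinAt.congr_deriv (by ring)
      have h3 : HasDerivWithinAt (fun t : ℝ => M1 / 2 * c * t ^ 2) (M1 * c * t)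
          (interior (Icc (0:ℝ) 1)) t :=
        ((hasDerivAt_pow 2 t).const_mul (M1 / 2 * c)).hasDerivWithinAt.congr_deriv (by ring)
      exact ((h1.sub h2).add h3).congr_deriv (by ring)
    · intro t ht
      rw [interior_Icc] at ht
      have := step1 t (Ioo_subset_Icc_self ht)
      linarith
  have h0 : (0:ℝ) ∈ Icc (0:ℝ) 1 := ⟨le_refl _, zero_le_one⟩
  have h1 : (1:ℝ) ∈ Icc (0:ℝ) 1 := ⟨zero_le_one, le_refl _⟩
  have hfin := hanti2 h0 h1 zero_le_one
  simp only [mul_zero, mul_one, one_pow, add_zero, sub_zero, zero_pow] at hfin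
  have hψ1 : ψ 1 = φ z := by rw [hψ]; simp [hγ1]
  have hψ0 : ψ 0 = φ y := by rw [hψ]; simp [hγ0]
  have hχ0 : χ 0 = ⟪g y, w⟫ := by rw [hχ]; simp [hγ0]
  rw [hψ1, hψ0, hχ0] at hfin
  have hz2 : M1 / 2 * c * (0:ℝ) ^ 2 = 0 := by norm_num
  rw [hz2, add_zero] at hfin
  show φ z ≤ φ y + ⟪g y, w⟫ - M1 / 2 * c
  linarith

/-- Strong concavity: quadratic improvement of convex combinations. -/
lemma sc_comb {dy : ℕ} {M1 : ℝ} {φ : E dy → ℝ} {g : E dy → E dy} {H : E dy → (E dy →L[ℝ] E dy)}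
    (hgrad : ∀ y ∈ cube dy, HasGradientWithinAt φ (g y) (cube dy) y)
    (hHess : ∀ y ∈ cube dy, HasFDerivWithinAt g (H y) (cube dy) y)
    (hgC : ContinuousOn g (cube dy))
    (hLoew : ∀ y ∈ cube dy, ∀ v : E dy, ⟪H y v, v⟫ ≤ -M1 * ‖v‖ ^ 2)
    {y z : E dy} (hy : y ∈ cube dy) (hz : z ∈ cube dy) {t : ℝ} (ht : t ∈ Icc (0:ℝ) 1) :
    (1 - t) * φ y + t * φ z + M1 / 2 * (t * (1 - t)) * ‖z - y‖ ^ 2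
      ≤ φ ((1 - t) • y + t • z) := by
  set w := z - y with hw
  set m := (1 - t) • y + t • z with hm
  have hmc : m ∈ cube dy := cube_convex dy hy hz (by linarith [ht.2]) ht.1 (by ring)
  have hym : y - m = -(t • w) := by
    simp only [hm, hw]; module
  have hzm : z - m = (1 - t) • w := by
    simp only [hm, hw]; module
  have hAy := sc_grad hgrad hHess hgC hLoew hmc hy
  have hAz := sc_grad hgrad hHess hgC hLoew hmc hz
  rw [hym] at hAy
  rw [hzm] at hAz
  have hiy : ⟪g m, -(t • w)⟫ = -(t * ⟪g m, w⟫) := by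
    rw [inner_neg_right, real_inner_smul_right]
  have hiz : ⟪g m, (1 - t) • w⟫ = (1 - t) * ⟪g m, w⟫ := real_inner_smul_right _ _ _
  have hny : ‖-(t • w)‖ ^ 2 = t ^ 2 * ‖w‖ ^ 2 := by
    rw [norm_neg, norm_smul, Real.norm_eq_abs, mul_pow, sq_abs]
  have hnz : ‖(1 - t) • w‖ ^ 2 = (1 - t) ^ 2 * ‖w‖ ^ 2 := by
    rw [norm_smul, Real.norm_eq_abs, mul_pow, sq_abs]
  rw [hiy, hny] at hAy
  rw [hiz, hnz] at hAz
  have h1 : 0 ≤ 1 - t := by linarith [ht.2]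
  have h2 : 0 ≤ t := ht.1
  nlinarith [mul_le_mul_of_nonneg_left hAy h1, mul_le_mul_of_nonneg_left hAz h2]

end Aux

/-- Lemma 5 of the paper: estimate on the distance between the maximizer
`y*(B)` of the bin-average `f_B` and the optimum `y*(x)` for any context `x ∈ B`, in terms of
the diameter of the bin `B`, for payoffs with Hessian bounds `-M5·I ⪯ ∂²f/∂y² ⪯ -M1·I`,
interior unique maximizers, and `α`-Hölder continuity in the context. -/
theorem stmt12 (dx dy : ℕ) (M1 M2 M5 α : ℝ)
    (hM1 : 0 < M1) (hM15 : M1 ≤ M5) (hM2 : 0 < M2) (hα : 0 < α) (hα1 : α ≤ 1)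
    (f : E dx → E dy → ℝ) (g : E dx → E dy → E dy)
    (H : E dx → E dy → (E dy →L[ℝ] E dy))
    (hgrad : ∀ x ∈ cube dx, ∀ y ∈ cube dy, HasGradientWithinAt (f x) (g x y) (cube dy) y)
    (hHess : ∀ x ∈ cube dx, ∀ y ∈ cube dy, HasFDerivWithinAt (g x) (H x y) (cube dy) y)
    (hgC : ∀ x ∈ cube dx, ContinuousOn (g x) (cube dy))
    (hHC : ∀ x ∈ cube dx, ContinuousOn (H x) (cube dy))
    (hLoew : ∀ x ∈ cube dx, ∀ y ∈ cube dy, ∀ v : E dy,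
      -M5 * ‖v‖ ^ 2 ≤ ⟪H x y v, v⟫ ∧ ⟪H x y v, v⟫ ≤ -M1 * ‖v‖ ^ 2)
    (ystar : E dx → E dy)
    (hystar : ∀ x ∈ cube dx, ystar x ∈ openCube dy ∧ IsMaxOn (f x) (cube dy) (ystar x) ∧
      ∀ y ∈ cube dy, IsMaxOn (f x) (cube dy) y → y = ystar x)
    (hHolder : ∀ y ∈ cube dy, ∀ x1 ∈ cube dx, ∀ x2 ∈ cube dx,
      |f x1 y - f x2 y| ≤ M2 * ‖x1 - x2‖ ^ α)
    (μ : Measure (E dx)) [IsProbabilityMeasure μ]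
    (B : Set (E dx)) (hBm : MeasurableSet B) (hBsub : B ⊆ cube dx) (hBpos : 0 < μ B)
    (yB : E dy) (hyB : yB ∈ cube dy)
    (hyBmax : IsMaxOn (fun y => (μ B).toReal⁻¹ * ∫ x in B, f x y ∂μ) (cube dy) yB) :
    ∀ x ∈ B,
      M1 * ‖ystar x - yB‖ ^ 2 ≤ 2 * M2 * Metric.diam B ^ α ∧
      ‖ystar x - yB‖ ≤ Real.sqrt (2 * M2 / M1) * Metric.diam B ^ (α / 2) := by
  intro x hx
  have hxc : x ∈ cube dx := hBsub hx
  set D := Metric.diam B with hD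
  have hD0 : 0 ≤ D := Metric.diam_nonneg
  have hDα0 : 0 ≤ D ^ α := Real.rpow_nonneg hD0 α
  set c0 := (μ B).toReal with hc0
  have hc0pos : 0 < c0 := ENNReal.toReal_pos hBpos.ne' (measure_ne_top μ B)
  have hc0ne : c0 ≠ 0 := hc0pos.ne'
  set F : E dy → ℝ := fun y => c0⁻¹ * ∫ x' in B, f x' y ∂μ with hF
  have hBbd : Bornology.IsBounded B := (cube_bounded dx).subset hBsub
  -- continuity of f in x, integrability
  have hcontx : ∀ y ∈ cube dy, ContinuousOn (fun x' => f x' y) (cube dx) := by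
    intro y hy x0 hx0
    have hb : ∀ᶠ x' in nhdsWithin x0 (cube dx), ‖f x' y - f x0 y‖ ≤ M2 * ‖x' - x0‖ ^ α := by
      filter_upwards [self_mem_nhdsWithin] with x' hx'
      rw [Real.norm_eq_abs]
      exact hHolder y hy x' hx' x0 hx0
    have htend : Filter.Tendsto (fun x' : E dx => M2 * ‖x' - x0‖ ^ α)
        (nhdsWithin x0 (cube dx)) (nhds 0) := by
      have h1 : Filter.Tendsto (fun x' : E dx => ‖x' - x0‖) (nhds x0) (nhds 0) := by
        have hcn : ContinuousAt (fun x' : E dx => ‖x' - x0‖) x0 := by fun_prop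
        simpa using hcn.tendsto
      have h2 : ContinuousAt (fun r : ℝ => r ^ α) 0 :=
        Real.continuousAt_rpow_const 0 α (Or.inr hα.le)
      have h3 := (h2.tendsto.comp h1).const_mul M2
      simp only [Function.comp] at h3
      have h4 : M2 * (0:ℝ) ^ α = 0 := by rw [Real.zero_rpow hα.ne']; ring
      rw [h4] at h3
      exact h3.mono_left nhdsWithin_le_nhds
    have h5 : Filter.Tendsto (fun x' => f x' y - f x0 y) (nhdsWithin x0 (cube dx)) (nhds 0) :=
      squeeze_zero_norm' hb htend
    have h6 := h5.add (tendsto_const_nhds (x := f x0 y))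
    exact (by simpa using h6 : Filter.Tendsto (fun x' => f x' y) (nhdsWithin x0 (cube dx)) (nhds (f x0 y)))
  have hInt : ∀ y ∈ cube dy, IntegrableOn (fun x' => f x' y) B μ := fun y hy =>
    (ContinuousOn.integrableOn_compact (cube_compact dx) (hcontx y hy)).mono_set hBsub
  -- pointwise Hölder bound over the bin
  have hptbd : ∀ y ∈ cube dy, ∀ x1 ∈ B, ∀ x2 ∈ B, |f x1 y - f x2 y| ≤ M2 * D ^ α := by
    intro y hy x1 hx1 x2 hx2
    refine (hHolder y hy x1 (hBsub hx1) x2 (hBsub hx2)).trans ?_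
    have hd : ‖x1 - x2‖ ≤ D := by
      rw [← dist_eq_norm]; exact Metric.dist_le_diam_of_mem hBbd hx1 hx2
    exact mul_le_mul_of_nonneg_left
      (Real.rpow_le_rpow (norm_nonneg _) hd hα.le) hM2.le
  -- |F y - f x0 y| ≤ M2 * D ^ α for x0 ∈ B
  have hFclose : ∀ y ∈ cube dy, ∀ x0 ∈ B, |F y - f x0 y| ≤ M2 * D ^ α := by
    intro y hy x0 hx0
    have hint := hInt y hy
    have hconst : IntegrableOn (fun _ : E dx => f x0 y) B μ :=
      integrableOn_const (measure_ne_top μ B)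
    have he : F y - f x0 y = c0⁻¹ * ∫ x' in B, (f x' y - f x0 y) ∂μ := by
      rw [integral_sub hint hconst, setIntegral_const, smul_eq_mul, measureReal_def, ← hc0]
      simp only [hF]; rw [mul_sub, ← mul_assoc, inv_mul_cancel₀ hc0ne, one_mul]
    rw [he, abs_mul, abs_of_nonneg (inv_nonneg.2 hc0pos.le)]
    have h1 : |∫ x' in B, (f x' y - f x0 y) ∂μ| ≤ c0 * (M2 * D ^ α) := by
      rw [← Real.norm_eq_abs]
      refine (norm_integral_le_integral_norm _).trans ?_
      have h2 : ∫ x' in B, ‖f x' y - f x0 y‖ ∂μ ≤ ∫ _x' in B, M2 * D ^ α ∂μ := by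
        refine setIntegral_mono_on (hint.sub hconst).norm
          (integrableOn_const (measure_ne_top μ B)) hBm ?_
        intro x' hx'
        rw [Real.norm_eq_abs]
        exact hptbd y hy x' hx' x0 hx0
      rw [setIntegral_const, smul_eq_mul, measureReal_def, ← hc0] at h2
      exact h2
    calc c0⁻¹ * |∫ x' in B, (f x' y - f x0 y) ∂μ| ≤ c0⁻¹ * (c0 * (M2 * D ^ α)) := by
          exact mul_le_mul_of_nonneg_left h1 (inv_nonneg.2 hc0pos.le)
      _ = M2 * D ^ α := by field_simp
  -- strong concavity of F at its maximizer
  have hFsc : ∀ z ∈ cube dy, F z + M1 / 2 * ‖z - yB‖ ^ 2 ≤ F yB := by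
    intro z hz
    set cz := ‖z - yB‖ ^ 2 with hcz
    have key : ∀ t ∈ Set.Ioc (0:ℝ) 1, F z + M1 / 2 * (1 - t) * cz ≤ F yB := by
      intro t ht
      have ht' : t ∈ Set.Icc (0:ℝ) 1 := ⟨ht.1.le, ht.2⟩
      set m := (1 - t) • yB + t • z with hmdef
      have hm : m ∈ cube dy := cube_convex dy hyB hz (by linarith [ht.2]) ht.1.le (by ring)
      have hpt : ∀ x' ∈ B,
          (1 - t) * f x' yB + t * f x' z + M1 / 2 * (t * (1 - t)) * cz ≤ f x' m := by
        intro x' hx'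
        exact sc_comb (hgrad x' (hBsub hx')) (hHess x' (hBsub hx')) (hgC x' (hBsub hx'))
          (fun y' hy' v => (hLoew x' (hBsub hx') y' hy' v).2) hyB hz ht'
      have hint1 := hInt yB hyB
      have hint2 := hInt z hz
      have hintm := hInt m hm
      have hcI : IntegrableOn (fun _ : E dx => M1 / 2 * (t * (1 - t)) * cz) B μ :=
        integrableOn_const (measure_ne_top μ B)
      have i1 : IntegrableOn (fun x' => (1 - t) * f x' yB) B μ := hint1.const_mul _
      have i2 : IntegrableOn (fun x' => t * f x' z) B μ := hint2.const_mul _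
      have i12 : IntegrableOn (fun x' => (1 - t) * f x' yB + t * f x' z) B μ := i1.add i2
      have hLHSint : IntegrableOn
          (fun x' => (1 - t) * f x' yB + t * f x' z + M1 / 2 * (t * (1 - t)) * cz) B μ :=
        i12.add hcI
      have hI := setIntegral_mono_on hLHSint hintm hBm hpt
      have e1 : ∫ x' in B, ((1 - t) * f x' yB + t * f x' z + M1 / 2 * (t * (1 - t)) * cz) ∂μ
          = (1 - t) * (∫ x' in B, f x' yB ∂μ) + t * (∫ x' in B, f x' z ∂μ)
            + c0 * (M1 / 2 * (t * (1 - t)) * cz) := by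
        rw [integral_add i12 hcI, integral_add i1 i2,
          integral_const_mul, integral_const_mul, setIntegral_const, smul_eq_mul, measureReal_def, ← hc0]
      rw [e1] at hI
      have hFm := isMaxOn_iff.1 hyBmax m hm
      have hI2 := mul_le_mul_of_nonneg_left hI (inv_nonneg.2 hc0pos.le)
      have e2 : c0⁻¹ * ((1 - t) * (∫ x' in B, f x' yB ∂μ) + t * (∫ x' in B, f x' z ∂μ)
            + c0 * (M1 / 2 * (t * (1 - t)) * cz))
          = (1 - t) * F yB + t * F z + M1 / 2 * (t * (1 - t)) * cz := by
        rw [hF]; field_simp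
      rw [e2] at hI2
      have hI3 : (1 - t) * F yB + t * F z + M1 / 2 * (t * (1 - t)) * cz ≤ F yB :=
        hI2.trans hFm
      have ht0 : 0 < t := ht.1
      have h4 : t * (F z + M1 / 2 * (1 - t) * cz) ≤ t * F yB := by nlinarith
      exact le_of_mul_le_mul_left h4 ht0
    have htend : Filter.Tendsto (fun t : ℝ => F z + M1 / 2 * (1 - t) * cz)
        (nhdsWithin 0 (Set.Ioi 0)) (nhds (F z + M1 / 2 * (1 - 0) * cz)) := by
      have : Continuous (fun t : ℝ => F z + M1 / 2 * (1 - t) * cz) := by fun_prop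
      exact (this.tendsto 0).mono_left nhdsWithin_le_nhds
    have hev : ∀ᶠ t in nhdsWithin (0:ℝ) (Set.Ioi 0), F z + M1 / 2 * (1 - t) * cz ≤ F yB := by
      filter_upwards [Ioc_mem_nhdsGT_of_mem
        (⟨le_refl (0:ℝ), zero_lt_one⟩ : (0:ℝ) ∈ Set.Ico (0:ℝ) 1)] with t ht
      exact key t ht
    have := le_of_tendsto htend hev
    simpa using this
  -- gradient vanishes at the interior maximizer
  obtain ⟨hyo, hymax, _⟩ := hystar x hxc
  have hyc : ystar x ∈ cube dy := openCube_subset dy hyo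
  have hnhd : cube dy ∈ nhds (ystar x) :=
    mem_nhds_iff.2 ⟨openCube dy, openCube_subset dy, openCube_open dy, hyo⟩
  have hg0 : g x (ystar x) = 0 := by
    have hfd : HasFDerivAt (f x) (InnerProductSpace.toDual ℝ (E dy) (g x (ystar x)))
        (ystar x) := ((hgrad x hxc _ hyc).hasFDerivWithinAt).hasFDerivAt hnhd
    have hloc : IsLocalMax (f x) (ystar x) := hymax.isLocalMax hnhd
    have h0 := hloc.hasFDerivAt_eq_zero hfd
    exact (LinearIsometryEquiv.map_eq_zero_iff _).1 h0
  -- strong concavity of f x at ystar x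
  have hA : ∀ y' ∈ cube dy, f x y' ≤ f x (ystar x) - M1 / 2 * ‖y' - ystar x‖ ^ 2 := by
    intro y' hy'
    have := sc_grad (hgrad x hxc) (hHess x hxc) (hgC x hxc)
      (fun y'' hy'' v => (hLoew x hxc y'' hy'' v).2) hyc hy'
    rw [hg0] at this
    simpa using this
  -- combine
  have h1 := hA yB hyB
  rw [norm_sub_rev] at h1
  have h2 := hFsc (ystar x) hyc
  have h3 := abs_le.1 (hFclose (ystar x) hyc x hx)
  have h4 := abs_le.1 (hFclose yB hyB x hx)
  have hmain : M1 * ‖ystar x - yB‖ ^ 2 ≤ 2 * M2 * D ^ α := by linarith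
  refine ⟨hmain, ?_⟩
  have hsq : ‖ystar x - yB‖ ^ 2 ≤ 2 * M2 / M1 * D ^ α := by
    rw [div_mul_eq_mul_div, le_div_iff₀ hM1]
    linarith
  calc ‖ystar x - yB‖ = Real.sqrt (‖ystar x - yB‖ ^ 2) :=
        (Real.sqrt_sq (norm_nonneg _)).symm
    _ ≤ Real.sqrt (2 * M2 / M1 * D ^ α) := Real.sqrt_le_sqrt hsq
    _ = Real.sqrt (2 * M2 / M1) * Real.sqrt (D ^ α) := Real.sqrt_mul (by positivity) _
    _ = Real.sqrt (2 * M2 / M1) * D ^ (α / 2) := by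
        congr 1
        rw [Real.sqrt_eq_rpow, ← Real.rpow_mul hD0]
        congr 1
        ring
end
end
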